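/- Let N ≥ 1 and n ≥ 1. For all words w, v ∈ W_n^{(N)}, dsw(w, v) ≤ (1/2)·N²·n²·ρ∞(w, v), where dsw(w, v) is the minimal number of interchanges of two neighboring letters needed to transform w into v. -/

import Mathlib

/-!
Sort `w` greedily: move the first occurrence of the first letter `c` of `v` to the front of `w`
by adjacent swaps, then recurse on the tails. The swaps are paid for by a potential: for every
ordered pair of distinct letters `k ≠ l`, the area between the prefix-count paths of `k` in the
`{k, l}`-subwords of `w` and `v`. Moving a letter past `a` others takes `a` swaps and lowers the
potential by exactly `2a`, so `2 dsw(w, v)` is at most the potential. Each of the `N(N-1)` areas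
is a sum of `2n` prefix-count deviations of subwords, and each of those is bounded by the largest
prefix-count deviation `M` of `w` and `v` themselves. Hence `dsw(w, v) ≤ N(N-1)nM`, which is
at most `N²n²ρ∞(w, v)/2`.
-/

/-- `v` is obtained from `w` by a single swap, i.e. an interchange of two neighboring
letters. -/
def AdjSwap {α : Type*} (w v : List α) : Prop :=
  ∃ (l₁ l₂ : List α) (a b : α), w = l₁ ++ a :: b :: l₂ ∧ v = l₁ ++ b :: a :: l₂

/-- The swap distance `dsw(w, v)`: the minimal number of interchanges of two neighboring
letters needed to transform the word `w` into the word `v`. -/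
noncomputable def dsw {α : Type*} (w v : List α) : ℕ :=
  sInf {k | ∃ f : ℕ → List α, f 0 = w ∧ f k = v ∧ ∀ i < k, AdjSwap (f i) (f (i + 1))}

/-- `ρ∞(w, v) = (2/n)·max_{1 ≤ k ≤ N, 1 ≤ j ≤ N·n} |w_{A_k}[j] − v_{A_k}[j]|` for words
`w, v` in the `N` letters `A₁, …, A_N` (encoded as elements of `Fin N`), where
`w_{A_k}[j] = (w.take j).count k` is the number of occurrences of `A_k` among the first
`j` letters. -/
noncomputable def rhoInfN (N n : ℕ) (w v : List (Fin N)) : ℝ :=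
  (2 / (n : ℝ)) * (((Finset.Icc 1 (N * n)) ×ˢ (Finset.univ : Finset (Fin N))).sup fun p =>
    (((w.take p.1).count p.2 : ℤ) - ((v.take p.1).count p.2 : ℤ)).natAbs : ℕ)

section SwapChain

variable {α : Type*}

inductive SwapChain : ℕ → List α → List α → Prop
  | refl (w : List α) : SwapChain 0 w w
  | head {k : ℕ} {w u v : List α} : AdjSwap w u → SwapChain k u v → SwapChain (k + 1) w v

namespace SwapChain

variable {k k' : ℕ} {w u v : List α}

theorem dsw_le (h : SwapChain k w v) : dsw w v ≤ k := by
  refine Nat.sInf_le ?_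
  induction h with
  | refl w => exact ⟨fun _ => w, rfl, rfl, fun i hi => absurd hi (Nat.not_lt_zero i)⟩
  | @head k w u v hwu _ ih =>
    obtain ⟨f, hf0, hfk, hf⟩ := ih
    refine ⟨fun i => if i = 0 then w else f (i - 1), rfl, by simpa using hfk, ?_⟩
    rintro (_ | i) hi
    · simpa [hf0] using hwu
    · simpa using hf i (by omega)

theorem trans (h₁ : SwapChain k w u) (h₂ : SwapChain k' u v) : SwapChain (k + k') w v := by
  induction h₁ with
  | refl => simpa using h₂
  | head hwu _ ih => rw [Nat.add_right_comm]; exact head hwu (ih h₂)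

theorem cons (a : α) (h : SwapChain k w v) : SwapChain k (a :: w) (a :: v) := by
  induction h with
  | refl w => exact refl _
  | head hwu _ ih =>
    obtain ⟨l₁, l₂, b, c, rfl, rfl⟩ := hwu
    exact head ⟨a :: l₁, l₂, b, c, rfl, rfl⟩ ih

end SwapChain

theorem swapChain_moveToFront (A : List α) (c : α) (X : List α) :
    SwapChain A.length (A ++ c :: X) (c :: (A ++ X)) := by
  induction A with
  | nil => exact .refl _
  | cons a A ih => exact (ih.cons a).trans (.head ⟨[], A ++ X, a, c, rfl, rfl⟩ (.refl _))

end SwapChain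

section CountArea

variable {α : Type*} [DecidableEq α]

def prefixCountDev (k : α) (x y : List α) (j : ℕ) : ℕ :=
  (((x.take j).count k : ℤ) - (y.take j).count k).natAbs

def countArea (k : α) (x y : List α) : ℕ :=
  ∑ j ∈ Finset.range x.length, prefixCountDev k x y (j + 1)

theorem count_take_append_of_notMem {c : α} {A : List α} (hA : c ∉ A) (B : List α) (m : ℕ) :
    ((A ++ B).take m).count c = (B.take (m - A.length)).count c := by
  rw [List.take_append, List.count_append,
    List.count_eq_zero.2 fun h => hA (List.mem_of_mem_take h), zero_add]

/-- Moving `c` to the front lowers each term before its old position by one and merely shifts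
the terms after it. -/
theorem countArea_moveToFront {c : α} {A : List α} (hA : c ∉ A) (X Y : List α) :
    countArea c (A ++ c :: X) (c :: Y) = A.length + countArea c (A ++ X) Y := by
  simp only [countArea, List.length_append, List.length_cons]
  have hY (j : ℕ) : ((c :: Y).take (j + 1)).count c = (Y.take j).count c + 1 := by
    simp [List.take_succ_cons]
  have before (j : ℕ) (hj : j < A.length) :
      prefixCountDev c (A ++ c :: X) (c :: Y) (j + 1) = (Y.take j).count c + 1 ∧
        prefixCountDev c (A ++ X) Y (j + 1) = (Y.take (j + 1)).count c := by
    simp only [prefixCountDev, count_take_append_of_notMem hA, hY, Nat.sub_eq_zero_of_le hj,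
      List.take_zero, List.count_nil]
    omega
  have at_c :
      prefixCountDev c (A ++ c :: X) (c :: Y) (A.length + 1) = (Y.take A.length).count c := by
    simp [prefixCountDev, count_take_append_of_notMem hA]
  have after (i : ℕ) : prefixCountDev c (A ++ c :: X) (c :: Y) (A.length + 1 + i + 1)
      = prefixCountDev c (A ++ X) Y (A.length + i + 1) := by
    unfold prefixCountDev
    rw [count_take_append_of_notMem hA, count_take_append_of_notMem hA, hY,
      show A.length + 1 + i + 1 - A.length = i + 1 + 1 by omega,
      show A.length + i + 1 - A.length = i + 1 by omega, List.take_succ_cons,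
      List.count_cons_self, show A.length + 1 + i = A.length + i + 1 by omega]
    omega
  rw [show A.length + (X.length + 1) = A.length + 1 + X.length by omega,
    Finset.sum_range_add _ (A.length + 1) X.length, Finset.sum_range_add _ A.length X.length,
    Finset.sum_range_succ, at_c,
    Finset.sum_congr rfl fun j hj => (before j (Finset.mem_range.1 hj)).1,
    Finset.sum_congr rfl fun j hj => (before j (Finset.mem_range.1 hj)).2,
    Finset.sum_congr rfl fun i _ => after i]
  have h₁ := Finset.sum_range_succ (fun j => (Y.take j).count c) A.length
  have h₂ := Finset.sum_range_succ' (fun j => (Y.take j).count c) A.length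
  simp only [Finset.sum_add_distrib, Finset.sum_const, Finset.card_range, smul_eq_mul,
    List.take_zero, List.count_nil] at h₁ h₂ ⊢
  omega

end CountArea

section PairArea

variable {α : Type*} [DecidableEq α]

theorem count_add_count_of_forall_mem {k l : α} (hkl : k ≠ l) {z : List α}
    (hz : ∀ a ∈ z, a = k ∨ a = l) : z.count k + z.count l = z.length := by
  induction z with
  | nil => rfl
  | cons a z ih =>
    have := ih fun b hb => hz b (List.mem_cons_of_mem a hb)
    rcases hz a List.mem_cons_self with rfl | rfl <;>
      simp [hkl, hkl.symm] <;> omega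

theorem countArea_eq_of_forall_mem {k l : α} (hkl : k ≠ l) {x y : List α}
    (hx : ∀ a ∈ x, a = k ∨ a = l) (hy : ∀ a ∈ y, a = k ∨ a = l)
    (hxy : x.length ≤ y.length) :
    countArea k x y = countArea l x y := by
  refine Finset.sum_congr rfl fun j hj => ?_
  have hx' := count_add_count_of_forall_mem hkl (z := x.take (j + 1))
    fun a ha => hx a (List.mem_of_mem_take ha)
  have hy' := count_add_count_of_forall_mem hkl (z := y.take (j + 1))
    fun a ha => hy a (List.mem_of_mem_take ha)
  simp only [List.length_take] at hx' hy'
  have := Finset.mem_range.1 hj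
  unfold prefixCountDev
  omega

def pairFilter (k l : α) (x : List α) : List α :=
  x.filter fun a => a = k ∨ a = l

theorem mem_pairFilter {k l a : α} {x : List α} (ha : a ∈ pairFilter k l x) :
    a = k ∨ a = l := by
  simpa [pairFilter] using (List.mem_filter.1 ha).2

theorem count_pairFilter_left (k l : α) (x : List α) : (pairFilter k l x).count k = x.count k :=
  List.count_filter (by simp)

theorem count_pairFilter_right (k l : α) (x : List α) : (pairFilter k l x).count l = x.count l :=
  List.count_filter (by simp)

theorem length_pairFilter {k l : α} (hkl : k ≠ l) (x : List α) :
    (pairFilter k l x).length = x.count k + x.count l := by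
  rw [← count_add_count_of_forall_mem hkl fun _ => mem_pairFilter, count_pairFilter_left,
    count_pairFilter_right]

def pairArea (k l : α) (w v : List α) : ℕ :=
  countArea k (pairFilter k l w) (pairFilter k l v)

theorem countArea_pairFilter_moveToFront {k l c : α} (hc : c = k ∨ c = l) {A : List α}
    (hA : c ∉ A) (X Y : List α) :
    countArea c (pairFilter k l (A ++ c :: X)) (pairFilter k l (c :: Y))
      = (pairFilter k l A).length + countArea c (pairFilter k l (A ++ X)) (pairFilter k l Y) := by
  have hcA : c ∉ pairFilter k l A := fun h => hA (List.mem_of_mem_filter h)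
  simpa [pairFilter, List.filter_append, hc] using countArea_moveToFront hcA
    (pairFilter k l X) (pairFilter k l Y)

theorem pairArea_moveToFront {k l c : α} (hkl : k ≠ l) {A X Y : List α} (hA : c ∉ A)
    (hp : (A ++ c :: X).Perm (c :: Y)) :
    pairArea k l (A ++ c :: X) (c :: Y) = (if k = c then A.count l else 0)
      + (if l = c then A.count k else 0) + pairArea k l (A ++ X) Y := by
  have hcA : A.count c = 0 := List.count_eq_zero.2 hA
  by_cases hk : k = c
  · subst hk
    rw [pairArea, pairArea, countArea_pairFilter_moveToFront (.inl rfl) hA,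
      length_pairFilter hkl, hcA]
    simp [hkl.symm]
  by_cases hl : l = c
  · subst hl
    have hpAX : (A ++ X).Perm Y := (List.perm_middle.symm.trans hp).cons_inv
    have hlen {w v : List α} (h : w.Perm v) :
        (pairFilter k l w).length ≤ (pairFilter k l v).length := by
      rw [length_pairFilter hkl, length_pairFilter hkl, h.count_eq, h.count_eq]
    rw [pairArea, pairArea, countArea_eq_of_forall_mem hkl (fun _ => mem_pairFilter)
      (fun _ => mem_pairFilter) (hlen hp), countArea_eq_of_forall_mem hkl
      (fun _ => mem_pairFilter) (fun _ => mem_pairFilter) (hlen hpAX),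
      countArea_pairFilter_moveToFront (.inr rfl) hA, length_pairFilter hkl, hcA]
    simp [hk]
  have hc : ¬(c = k ∨ c = l) := by tauto
  simp [pairArea, pairFilter, List.filter_append, hc, hk, hl]

end PairArea

section SwapPotential

variable {α : Type*} [DecidableEq α] [Fintype α]

theorem sum_count_eq_length (A : List α) : ∑ a, A.count a = A.length := by
  simpa using Multiset.sum_count_eq_card (s := Finset.univ) (m := (A : Multiset α)) (by simp)

def swapPotential (w v : List α) : ℕ :=
  ∑ k, ∑ l ∈ Finset.univ.erase k, pairArea k l w v

theorem swapPotential_moveToFront {c : α} {A X Y : List α} (hA : c ∉ A)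
    (hp : (A ++ c :: X).Perm (c :: Y)) :
    swapPotential (A ++ c :: X) (c :: Y) = 2 * A.length + swapPotential (A ++ X) Y := by
  have hcA : A.count c = 0 := List.count_eq_zero.2 hA
  have moved_left : ∑ k, ∑ l ∈ Finset.univ.erase k, (if k = c then A.count l else 0)
      = A.length := by
    simp only [Finset.sum_ite_irrel, Finset.sum_const_zero, Finset.sum_ite_eq',
      Finset.mem_univ, if_true]
    rw [Finset.sum_erase _ (f := fun a => A.count a) hcA, sum_count_eq_length]
  have moved_right : ∑ k, ∑ l ∈ Finset.univ.erase k, (if l = c then A.count k else 0)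
      = A.length := by
    rw [← sum_count_eq_length A]
    refine Finset.sum_congr rfl fun k _ => ?_
    rw [Finset.sum_ite_eq']
    by_cases hk : k = c <;> simp [hk, Ne.symm, hcA]
  simp only [swapPotential]
  rw [Finset.sum_congr rfl fun k _ => Finset.sum_congr rfl fun l hl =>
    pairArea_moveToFront (Finset.ne_of_mem_erase hl).symm hA hp]
  simp only [Finset.sum_add_distrib, moved_left, moved_right]
  ring

theorem exists_swapChain_two_mul_eq_swapPotential {w v : List α} (hp : w.Perm v) :
    ∃ m, SwapChain m w v ∧ 2 * m = swapPotential w v := by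
  induction v generalizing w with
  | nil =>
    obtain rfl := hp.eq_nil
    exact ⟨0, .refl _, by simp [swapPotential, pairArea, countArea, pairFilter]⟩
  | cons c Y ih =>
    obtain ⟨A, X, hA, rfl, -⟩ := List.exists_erase_eq (hp.mem_iff.2 List.mem_cons_self)
    obtain ⟨m, hm, hmΦ⟩ := ih (List.perm_middle.symm.trans hp).cons_inv
    refine ⟨A.length + m, (swapChain_moveToFront A c X).trans (hm.cons c), ?_⟩
    rw [swapPotential_moveToFront hA hp, ← hmΦ]
    ring

theorem two_mul_dsw_le_swapPotential {w v : List α} (hp : w.Perm v) :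
    2 * dsw w v ≤ swapPotential w v := by
  obtain ⟨m, hm, hmΦ⟩ := exists_swapChain_two_mul_eq_swapPotential hp
  have := hm.dsw_le
  omega

end SwapPotential

section Bounds

variable {α : Type*}

theorem exists_countP_take_eq (p : α → Bool) (x : List α) {m : ℕ} (hm : m ≤ x.countP p) :
    ∃ j ≤ x.length, (x.take j).countP p = m := by
  induction x generalizing m with
  | nil => exact ⟨0, le_rfl, by simp at hm; simp [hm]⟩
  | cons a x ih =>
    rcases m with _ | m
    · exact ⟨0, Nat.zero_le _, by simp⟩
    by_cases ha : p a
    · obtain ⟨j, hj, hjm⟩ := ih (m := m) (by simp [ha] at hm; omega)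
      exact ⟨j + 1, by simpa using hj, by simp [ha, hjm]⟩
    · obtain ⟨j, hj, hjm⟩ := ih (m := m + 1) (by simpa [List.countP_cons, ha] using hm)
      exact ⟨j + 1, by simpa using hj, by simp [ha, hjm]⟩

theorem filter_take_eq_take_filter (p : α → Bool) (x : List α) (j : ℕ) :
    (x.take j).filter p = (x.filter p).take ((x.take j).countP p) := by
  rw [List.countP_eq_length_filter]
  exact List.prefix_iff_eq_take.1 ((List.take_prefix j x).filter p)

variable [DecidableEq α]

theorem count_take_le_count_take_add (x : List α) (a : α) {i i' : ℕ} (h : i ≤ i') :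
    (x.take i').count a ≤ (x.take i).count a + (i' - i) := by
  obtain ⟨d, rfl⟩ := Nat.exists_eq_add_of_le h
  rw [List.take_add, List.count_append, Nat.add_sub_cancel_left]
  exact Nat.add_le_add_left ((List.count_le_length (a := a)).trans (List.length_take_le _ _)) _

theorem prefixCountDev_pairFilter_le {k l : α} (hkl : k ≠ l) {w v : List α} {M : ℕ}
    (hM : ∀ j ≤ w.length, ∀ a : α, prefixCountDev a w v j ≤ M)
    {j' : ℕ} (hj' : j' ≤ (pairFilter k l w).length) :
    prefixCountDev k (pairFilter k l w) (pairFilter k l v) j' ≤ M := by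
  -- Cut `w` at the `j` whose first `j` letters contain exactly `j'` letters `k` or `l`, and cut
  -- the subword of `v` at the matching `s`; then `|s - j'|` is controlled by the deviations
  -- of `k` and `l` at `j`, and moving the cut by one letter changes a count by at most one.
  set p : α → Bool := fun a => a = k ∨ a = l
  obtain ⟨j, hj, hjj'⟩ := exists_countP_take_eq p w (m := j')
    (by rwa [List.countP_eq_length_filter])
  have hskl : (v.take j).countP p = (v.take j).count k + (v.take j).count l := by
    rw [List.countP_eq_length_filter, ← pairFilter, length_pairFilter hkl]
  set s := (v.take j).countP p
  have hwk : ((pairFilter k l w).take j').count k = (w.take j).count k := by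
    rw [← hjj', pairFilter, ← filter_take_eq_take_filter, ← pairFilter, count_pairFilter_left]
  have hvk : ((pairFilter k l v).take s).count k = (v.take j).count k := by
    rw [pairFilter, ← filter_take_eq_take_filter, ← pairFilter, count_pairFilter_left]
  have hj'kl : j' = (w.take j).count k + (w.take j).count l := by
    rw [← hjj', List.countP_eq_length_filter, ← pairFilter, length_pairFilter hkl]
  have hMk := hM j hj k
  have hMl := hM j hj l
  unfold prefixCountDev at hMk hMl ⊢
  rcases le_total s j' with h | h <;>
  · have := count_take_le_count_take_add (pairFilter k l v) k h
    have := (List.take_sublist_take_left (l := pairFilter k l v) h).count_le k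
    omega

theorem countArea_le {k : α} {x y : List α} {M : ℕ}
    (hM : ∀ j ≤ x.length, prefixCountDev k x y j ≤ M) :
    countArea k x y ≤ x.length * M := by
  simpa [countArea] using
    Finset.sum_le_card_nsmul _ _ M fun j hj => hM (j + 1) (Finset.mem_range.1 hj)

theorem pairArea_le {k l : α} (hkl : k ≠ l) {w v : List α} {M : ℕ}
    (hM : ∀ j ≤ w.length, ∀ a : α, prefixCountDev a w v j ≤ M) :
    pairArea k l w v ≤ (w.count k + w.count l) * M := by
  rw [← length_pairFilter hkl]
  exact countArea_le fun _ => prefixCountDev_pairFilter_le hkl hM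

theorem dsw_le_of_prefixCountDev_le [Fintype α] {w v : List α} {n M : ℕ}
    (hw : ∀ a : α, w.count a = n) (hp : w.Perm v)
    (hM : ∀ j ≤ w.length, ∀ a : α, prefixCountDev a w v j ≤ M) :
    dsw w v ≤ Fintype.card α * (Fintype.card α - 1) * n * M := by
  have hΦ : swapPotential w v ≤ ∑ _k : α, ∑ _l ∈ Finset.univ.erase _k, 2 * n * M :=
    Finset.sum_le_sum fun k _ => Finset.sum_le_sum fun l hl => by
      simpa [hw, two_mul] using pairArea_le (Finset.ne_of_mem_erase hl).symm hM
  simp only [Finset.sum_const, Finset.card_erase_of_mem (Finset.mem_univ _),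
    Finset.card_univ, smul_eq_mul] at hΦ
  have := two_mul_dsw_le_swapPotential hp
  nlinarith

end Bounds

theorem dsw_le_rhoInf_general (N n : ℕ) (hn : 1 ≤ n) (w v : List (Fin N))
    (hwl : w.length = N * n) (hw : ∀ k : Fin N, w.count k = n)
    (hv : ∀ k : Fin N, v.count k = n) :
    (dsw w v : ℝ) ≤ (1 / 2) * (N : ℝ) ^ 2 * (n : ℝ) ^ 2 * rhoInfN N n w v := by
  set M := ((Finset.Icc 1 (N * n)) ×ˢ (Finset.univ : Finset (Fin N))).sup fun p =>
    (((w.take p.1).count p.2 : ℤ) - ((v.take p.1).count p.2 : ℤ)).natAbs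
  have hM : ∀ j ≤ w.length, ∀ k : Fin N, prefixCountDev k w v j ≤ M := by
    intro j hj k
    rcases Nat.eq_zero_or_pos j with rfl | hj₀
    · simp [prefixCountDev]
    · exact Finset.le_sup (f := fun p : ℕ × Fin N => prefixCountDev p.2 w v p.1) (b := (j, k))
        (by simp [hwl ▸ hj, Nat.one_le_iff_ne_zero, hj₀.ne'])
  have hp : w.Perm v := List.perm_iff_count.2 fun k => (hw k).trans (hv k).symm
  have hdsw : dsw w v ≤ N ^ 2 * n * M := by
    have := dsw_le_of_prefixCountDev_le hw hp hM
    rw [Fintype.card_fin] at this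
    exact this.trans (by gcongr; rw [sq]; exact Nat.mul_le_mul_left N (Nat.sub_le N 1))
  have hn₀ : (n : ℝ) ≠ 0 := by positivity
  calc (dsw w v : ℝ) ≤ N ^ 2 * n * M := by exact_mod_cast hdsw
    _ = (1 / 2) * (N : ℝ) ^ 2 * (n : ℝ) ^ 2 * (2 / n * M) := by field_simp

/-- For all words `w, v ∈ W_n^{(N)}` (words of length `N·n` with exactly `n` occurrences
of each of the `N` letters), `dsw(w, v) ≤ (1/2)·N²·n²·ρ∞(w, v)`. -/
theorem dsw_le_rhoInf (N n : ℕ) (hN : 1 ≤ N) (hn : 1 ≤ n) (w v : List (Fin N))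
    (hwl : w.length = N * n) (hw : ∀ k : Fin N, w.count k = n)
    (hvl : v.length = N * n) (hv : ∀ k : Fin N, v.count k = n) :
    (dsw w v : ℝ) ≤ (1 / 2) * (N : ℝ) ^ 2 * (n : ℝ) ^ 2 * rhoInfN N n w v :=
  dsw_le_rhoInf_general N n hn w v hwl hw hv
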